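/- arXiv:2403.04100 — 2 statements merged into one kernel-verified Lean document; each statement's English description precedes it below -/
import Mathlib

section
/- In any reduced form R of a matrix M obtained by left-to-right column additions, i = low(R_j) for some j if and only if rank M[i..n,1..j] − rank M[i+1..n,1..j] − rank M[i..n,1..j−1] + rank M[i+1..n,1..j−1] = 1. -/
/-- Left-to-right column addition over ℤ/2: add column `i` to column `j`. -/
def colAdd {n : ℕ} (M : Matrix (Fin n) (Fin n) (ZMod 2)) (i j : Fin n) :
    Matrix (Fin n) (Fin n) (ZMod 2) :=
  fun r c => if c = j then M r j + M r i else M r c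

/-- One step of left-to-right column reduction: add some column `i` to a
later column `j`. -/
def Step {n : ℕ} (M N : Matrix (Fin n) (Fin n) (ZMod 2)) : Prop :=
  ∃ i j : Fin n, i < j ∧ N = colAdd M i j

/-- `R` is obtained from `M` by a finite sequence of left-to-right column
additions. -/
def Reduces {n : ℕ} (M R : Matrix (Fin n) (Fin n) (ZMod 2)) : Prop :=
  Relation.ReflTransGen Step M R

/-- `i` is the lowest one (largest row index of a nonzero entry) of
column `j` of `R`. -/
def IsLow {n : ℕ} (R : Matrix (Fin n) (Fin n) (ZMod 2)) (i j : Fin n) : Prop :=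
  R i j ≠ 0 ∧ ∀ r, R r j ≠ 0 → r ≤ i

/-- A matrix is reduced if distinct nonzero columns have distinct lowest ones. -/
def Reduced {n : ℕ} (R : Matrix (Fin n) (Fin n) (ZMod 2)) : Prop :=
  ∀ i j j', IsLow R i j → IsLow R i j' → j = j'

/-- Rank over ℤ/2 of the lower-left submatrix of `M` consisting of the rows
with (0-based) index ≥ i and the first j columns (0-based index < j). -/
noncomputable def rankLL {n : ℕ} (M : Matrix (Fin n) (Fin n) (ZMod 2)) (i j : ℕ) : ℕ :=
  (M.submatrix (fun r : {r : Fin n // i ≤ r.val} => r.1)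
    (fun c : {c : Fin n // c.val < j} => c.1)).rank

/-!
A left-to-right column addition multiplies every lower-left block `M[≥ a, < b]` on the right by a
transvection (or leaves it unchanged), so the ranks `rankLL` may be computed in `R` instead of `M`.
In the reduced matrix `R` the nonzero columns of a lower-left block have pairwise distinct lowest
ones, hence are linearly independent, so `rankLL R a b` counts the columns `c < b` with a nonzero
entry in some row `≥ a`. The alternating sum of the four counts is then `1` exactly when column `j`
has a nonzero entry in some row `≥ i` but none in a row `> i`, i.e. when `i = low(R_j)`.
-/

open Matrix Finset

theorem linearIndependent_of_lastNonzero_injective {κ ι K : Type*} [Fintype κ] [LinearOrder ι]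
    [Ring K] [NoZeroDivisors K] (v : κ → ι → K) (l : κ → ι) (hl : Function.Injective l)
    (hne : ∀ k, v k (l k) ≠ 0) (hzero : ∀ k r, l k < r → v k r = 0) :
    LinearIndependent K v := by
  classical
  rw [Fintype.linearIndependent_iff]
  intro g hg
  by_contra! hsupp
  obtain ⟨k, hk, hmax⟩ :=
    (univ.filter (g · ≠ 0)).exists_max_image l (by simpa [Finset.Nonempty] using hsupp)
  have hk : g k ≠ 0 := (mem_filter.mp hk).2
  have hsingle : ∑ k', (g k' • v k') (l k) = g k * v k (l k) := by
    refine sum_eq_single k (fun k' _ hk' => ?_) (by simp)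
    by_cases hgk' : g k' = 0
    · simp [hgk']
    · have hlt : l k' < l k :=
        lt_of_le_of_ne (hmax k' (by simpa using hgk')) (hl.ne hk')
      simp [hzero k' (l k) hlt]
  have hcoord := congrFun hg (l k)
  rw [Finset.sum_apply, hsingle] at hcoord
  exact mul_ne_zero hk (hne k) hcoord

theorem Matrix.rank_eq_card_col_ne_zero {m κ K : Type*} [Fintype m] [Fintype κ] [Field K]
    (A : Matrix m κ K) (h : LinearIndependent K (fun c : {c // A.col c ≠ 0} => A.col c)) :
    A.rank = Nat.card {c // A.col c ≠ 0} := by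
  classical
  have hspan : Submodule.span K (Set.range A.col)
      = Submodule.span K (Set.range (fun c : {c // A.col c ≠ 0} => A.col c)) := by
    refine le_antisymm (Submodule.span_le.mpr ?_) (Submodule.span_mono ?_)
    · rintro _ ⟨c, rfl⟩
      by_cases hc : A.col c = 0
      · simp [hc]
      · exact Submodule.subset_span ⟨⟨c, hc⟩, rfl⟩
    · rintro _ ⟨c, rfl⟩
      exact ⟨c, rfl⟩
  rw [rank_eq_finrank_span_cols, hspan, finrank_span_eq_card h, Nat.card_eq_fintype_card]

theorem rankLL_colAdd {n : ℕ} (M : Matrix (Fin n) (Fin n) (ZMod 2)) {i j : Fin n}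
    (hij : i < j) (a b : ℕ) : rankLL (colAdd M i j) a b = rankLL M a b := by
  unfold rankLL
  by_cases hjb : j.val < b
  · set i' : {c : Fin n // c.val < b} := ⟨i, (Fin.lt_def.mp hij).trans hjb⟩
    set j' : {c : Fin n // c.val < b} := ⟨j, hjb⟩
    have hij' : i' ≠ j' := fun h => hij.ne (congrArg Subtype.val h)
    have hmul : (colAdd M i j).submatrix (fun r : {r : Fin n // a ≤ r.val} => r.1)
          (fun c : {c : Fin n // c.val < b} => c.1)
        = M.submatrix (fun r : {r : Fin n // a ≤ r.val} => r.1)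
            (fun c : {c : Fin n // c.val < b} => c.1) * transvection i' j' (1 : ZMod 2) := by
      ext r c
      rcases eq_or_ne c j' with rfl | hc
      · rw [mul_transvection_apply_same]
        simp [colAdd, j', i']
      · have hcj : c.1 ≠ j := fun h => hc (Subtype.ext h)
        rw [mul_transvection_apply_of_ne i' j' r c hc]
        simp [colAdd, hcj]
    rw [hmul, rank_mul_eq_left_of_isUnit_det _ _ (by simp [det_transvection_of_ne _ _ hij'])]
  · congr 1
    ext r c
    have hcj : c.1 ≠ j := fun h => hjb (h ▸ c.2)
    simp [colAdd, hcj]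

theorem rankLL_eq_of_reduces {n : ℕ} {M R : Matrix (Fin n) (Fin n) (ZMod 2)}
    (h : Reduces M R) (a b : ℕ) : rankLL R a b = rankLL M a b := by
  induction h with
  | refl => rfl
  | tail _ hstep ih =>
    obtain ⟨i, j, hij, rfl⟩ := hstep
    rw [rankLL_colAdd _ hij, ih]

theorem exists_isLow_of_ne_zero {n : ℕ} {R : Matrix (Fin n) (Fin n) (ZMod 2)} {r c : Fin n}
    (h : R r c ≠ 0) : ∃ l, IsLow R l c ∧ r ≤ l := by
  classical
  have hr : r ∈ univ.filter (R · c ≠ 0) := by simpa using h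
  set l := (univ.filter (R · c ≠ 0)).max' ⟨r, hr⟩
  refine ⟨l, ⟨?_, fun x hx => le_max' _ x (by simpa using hx)⟩, le_max' _ r hr⟩
  simpa using max'_mem _ ⟨r, hr⟩

def NonzeroFrom {n : ℕ} (R : Matrix (Fin n) (Fin n) (ZMod 2)) (a : ℕ) (c : Fin n) : Prop :=
  ∃ r : Fin n, a ≤ r.val ∧ R r c ≠ 0

instance {n : ℕ} (R : Matrix (Fin n) (Fin n) (ZMod 2)) (a : ℕ) :
    DecidablePred (NonzeroFrom R a) :=
  fun _ => inferInstanceAs (Decidable (∃ _, _))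

theorem rankLL_eq_card_nonzeroFrom {n : ℕ} {R : Matrix (Fin n) (Fin n) (ZMod 2)}
    (hR : Reduced R) (a b : ℕ) :
    rankLL R a b = #{c | c.val < b ∧ NonzeroFrom R a c} := by
  set A := R.submatrix (fun r : {r : Fin n // a ≤ r.val} => r.1)
    (fun c : {c : Fin n // c.val < b} => c.1)
  have hcol : ∀ c, A.col c ≠ 0 ↔ NonzeroFrom R a c := by
    intro c
    simp [NonzeroFrom, funext_iff, A]
  have hlow : ∀ c : {c // A.col c ≠ 0}, ∃ l : {r : Fin n // a ≤ r.val}, IsLow R l c.1.1 := by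
    rintro ⟨c, hc⟩
    obtain ⟨r, hr, hrc⟩ := (hcol c).mp hc
    obtain ⟨l, hl, hrl⟩ := exists_isLow_of_ne_zero hrc
    exact ⟨⟨l, hr.trans hrl⟩, hl⟩
  choose l hl using hlow
  have hindep : LinearIndependent (ZMod 2) (fun c : {c // A.col c ≠ 0} => A.col c) :=
    linearIndependent_of_lastNonzero_injective _ l
      (fun c c' h => Subtype.ext (Subtype.ext (hR _ _ _ (hl c) (h ▸ hl c'))))
      (fun c => (hl c).1)
      (fun c r hr => by_contra fun hrc => not_le.mpr hr ((hl c).2 r hrc))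
  unfold rankLL
  rw [rank_eq_card_col_ne_zero A hindep, Nat.card_congr
    ((Equiv.subtypeEquivRight hcol).trans (Equiv.subtypeSubtypeEquivSubtypeInter _ _)),
    Nat.card_eq_fintype_card, Fintype.card_subtype]

theorem card_filter_val_lt_succ {n : ℕ} (p : Fin n → Prop) [DecidablePred p] (j : Fin n) :
    #{c : Fin n | c.val < j.val + 1 ∧ p c}
      = #{c : Fin n | c.val < j.val ∧ p c} + if p j then 1 else 0 := by
  have hIic : ({c : Fin n | c.val < j.val + 1 ∧ p c} : Finset (Fin n)) = (Iic j).filter p := by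
    ext c
    simp only [mem_filter, mem_univ, true_and, mem_Iic, Fin.le_def, Nat.lt_succ_iff]
  have hIio : ({c : Fin n | c.val < j.val ∧ p c} : Finset (Fin n)) = (Iio j).filter p := by
    ext c
    simp only [mem_filter, mem_univ, true_and, mem_Iio, Fin.lt_def]
  rw [hIic, hIio, Iic_eq_cons_Iio, filter_cons]
  split_ifs <;> simp

theorem NonzeroFrom.of_succ {n : ℕ} {R : Matrix (Fin n) (Fin n) (ZMod 2)} {a : ℕ} {c : Fin n}
    (h : NonzeroFrom R (a + 1) c) : NonzeroFrom R a c :=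
  let ⟨r, hr, hrc⟩ := h; ⟨r, by omega, hrc⟩

theorem isLow_iff_nonzeroFrom {n : ℕ} {R : Matrix (Fin n) (Fin n) (ZMod 2)} {i j : Fin n} :
    IsLow R i j ↔ NonzeroFrom R i j ∧ ¬ NonzeroFrom R (i + 1) j := by
  simp only [IsLow, NonzeroFrom, not_exists, not_and, not_not, Fin.le_def]
  constructor
  · rintro ⟨hij, hmax⟩
    exact ⟨⟨i, le_rfl, hij⟩, fun r hr => by_contra fun hrj => by have := hmax r hrj; omega⟩
  · rintro ⟨⟨r, hir, hrj⟩, hbelow⟩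
    have hri : r = i := Fin.ext (le_antisymm (by_contra fun h => hrj (hbelow r (by omega))) hir)
    exact ⟨hri ▸ hrj, fun r' hr' => by_contra fun h => hr' (hbelow r' (by omega))⟩

/-- in any reduced form `R` of `M` obtained by left-to-right column
additions, `i = low(R_j)` iff
rank M[i..n,1..j] − rank M[i+1..n,1..j] − rank M[i..n,1..j−1] + rank M[i+1..n,1..j−1] = 1
(written additively in ℕ; `rankLL M a b` is the rank of the rows with 0-based
index ≥ a and the first b columns). -/
theorem isLow_iff_rank_formula
    {n : ℕ} (M R : Matrix (Fin n) (Fin n) (ZMod 2))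
    (hred : Reduces M R) (hR : Reduced R) (i j : Fin n) :
    IsLow R i j ↔
      rankLL M i.val (j.val + 1) + rankLL M (i.val + 1) j.val
        = rankLL M (i.val + 1) (j.val + 1) + rankLL M i.val j.val + 1 := by
  simp only [← rankLL_eq_of_reduces hred, rankLL_eq_card_nonzeroFrom hR,
    card_filter_val_lt_succ, isLow_iff_nonzeroFrom]
  have hmono := @NonzeroFrom.of_succ _ R i j
  split_ifs <;> simp_all <;> omega
end

section
/- Anti-transpose duality: if M is the boundary matrix of a filtration with n simplices and M^⊥ is its anti-transpose defined by (M^⊥)_{i,j} = M_{n+1-j, n+1-i}, then (i, j) is a persistence pair of M if and only if (n+1-j, n+1-i) is a persistence pair of M^⊥. -/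
/-- (i, j) is a persistence pair of `M`: `i` is the lowest one of column `j`
in some (equivalently, by uniqueness of the pairing, any) reduced form of `M`
obtained by left-to-right column additions. -/
def PersPair {n : ℕ} (M : Matrix (Fin n) (Fin n) (ZMod 2)) (i j : Fin n) : Prop :=
  ∃ R, Reduces M R ∧ Reduced R ∧ IsLow R i j

/-- The anti-transpose of `M`: entry (i,j) is entry (n+1-j, n+1-i) of `M`
(1-based), i.e. reflection across the antidiagonal. -/
def antiTranspose {n : ℕ} (M : Matrix (Fin n) (Fin n) (ZMod 2)) :
    Matrix (Fin n) (Fin n) (ZMod 2) :=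
  fun i j => M j.rev i.rev

/-!
Left-to-right column additions preserve the rank of every lower-left block (rows `≥ i`,
columns `≤ j`) of a matrix. In a reduced matrix the rank of such a block counts the columns whose
lowest one lies in it, so the persistence pairs can be read off these ranks by inclusion–exclusion
(the pairing lemma). Anti-transposition turns the lower-left block of `M` at `(i, j)` into the
transpose of the lower-left block of `antiTranspose M` at `(j.rev, i.rev)`, and the
inclusion–exclusion criterion is symmetric under this exchange.
-/

open Finset Matrix Module Submodule

theorem linearIndependent_of_injective_low {ι κ K : Type*} [Ring K] [NoZeroDivisors K]
    [LinearOrder κ] {v : ι → κ → K} (low : ι → κ) (hlow : ∀ c, v c (low c) ≠ 0)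
    (hbelow : ∀ c r, low c < r → v c r = 0) (hinj : Function.Injective low) :
    LinearIndependent K v := by
  classical
  rw [linearIndependent_iff']
  intro s
  induction s using Finset.induction_on_max_value low with
  | empty => simp
  | insert a s has hmax ih =>
    intro g hg
    have hvanish : ∀ x ∈ s, v x (low a) = 0 := fun x hx =>
      hbelow x _ ((hmax x hx).lt_of_ne fun h => has (hinj h ▸ hx))
    have hga : g a = 0 := by
      have hrow := congrFun hg (low a)
      simp only [sum_insert has, Finset.sum_apply, Pi.smul_apply, smul_eq_mul,
        Pi.zero_apply] at hrow
      rw [sum_eq_zero fun x hx => by rw [hvanish x hx, mul_zero], add_zero] at hrow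
      exact (mul_eq_zero.1 hrow).resolve_right (hlow a)
    rw [sum_insert has, hga, zero_smul, zero_add] at hg
    intro x hx
    rcases mem_insert.1 hx with rfl | hx
    · exact hga
    · exact ih g hg x hx

variable {n : ℕ}

noncomputable def blockRank (M : Matrix (Fin n) (Fin n) (ZMod 2)) (I J : Finset (Fin n)) : ℕ :=
  (M.submatrix ((↑) : I → Fin n) ((↑) : J → Fin n)).rank

section ColumnOperations

variable {M R : Matrix (Fin n) (Fin n) (ZMod 2)}

lemma colAdd_colAdd {i j : Fin n} (hij : i ≠ j) : colAdd (colAdd M i j) i j = M := by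
  ext r c
  by_cases hc : c = j
  · subst hc
    simp [colAdd, hij, add_assoc, CharTwo.add_self_eq_zero]
  · simp [colAdd, hc]

lemma blockRank_colAdd_le {i j : Fin n} {I J : Finset (Fin n)} (hJ : j ∈ J → i ∈ J) :
    blockRank (colAdd M i j) I J ≤ blockRank M I J := by
  rw [blockRank, blockRank, rank_eq_finrank_span_cols, rank_eq_finrank_span_cols]
  set A := M.submatrix ((↑) : I → Fin n) ((↑) : J → Fin n)
  set B := (colAdd M i j).submatrix ((↑) : I → Fin n) ((↑) : J → Fin n)
  refine Submodule.finrank_mono (span_le.2 (Set.range_subset_iff.2 fun c => ?_))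
  by_cases hc : c.1 = j
  · have hcol : B.col c = A.col c + A.col ⟨i, hJ (hc ▸ c.2)⟩ := by
      ext r; simp [A, B, colAdd, hc]
    rw [hcol]
    exact add_mem (subset_span ⟨_, rfl⟩) (subset_span ⟨_, rfl⟩)
  · have hcol : B.col c = A.col c := by
      ext r; simp [A, B, colAdd, hc]
    rw [hcol]
    exact subset_span ⟨_, rfl⟩

lemma blockRank_colAdd {i j : Fin n} (hij : i ≠ j) {I J : Finset (Fin n)}
    (hJ : j ∈ J → i ∈ J) : blockRank (colAdd M i j) I J = blockRank M I J :=
  (blockRank_colAdd_le hJ).antisymm <| by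
    simpa only [colAdd_colAdd hij] using blockRank_colAdd_le (M := colAdd M i j) (I := I) hJ

lemma Reduces.blockRank_eq (h : Reduces M R) (I : Finset (Fin n)) {J : Finset (Fin n)}
    (hJ : IsLowerSet (J : Set (Fin n))) : blockRank R I J = blockRank M I J := by
  induction h with
  | refl => rfl
  | tail _ hstep ih =>
    obtain ⟨a, b, hab, rfl⟩ := hstep
    rw [blockRank_colAdd hab.ne fun hb => hJ hab.le hb, ih]

end ColumnOperations

section Reduction

variable {R : Matrix (Fin n) (Fin n) (ZMod 2)}

lemma exists_isLow {c : Fin n} (h : ∃ r, R r c ≠ 0) : ∃ i, IsLow R i c := by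
  obtain ⟨i, hi, hmax⟩ := (univ.filter fun r => R r c ≠ 0).exists_max_image id
    (by simpa [Finset.Nonempty] using h)
  exact ⟨i, (mem_filter.1 hi).2, fun r hr => hmax r (by simpa using hr)⟩

def colHeight (R : Matrix (Fin n) (Fin n) (ZMod 2)) (c : Fin n) : ℕ :=
  (univ.filter fun r => R r c ≠ 0).sup fun r => (r : ℕ) + 1

lemma colHeight_le_iff {c : Fin n} {k : ℕ} :
    colHeight R c ≤ k ↔ ∀ r, R r c ≠ 0 → (r : ℕ) < k := by
  simp [colHeight]

lemma IsLow.colHeight_eq {i c : Fin n} (h : IsLow R i c) : colHeight R c = i + 1 :=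
  (colHeight_le_iff.2 fun r hr => Nat.lt_succ_of_le (h.2 r hr)).antisymm <|
    Finset.le_sup (f := fun r : Fin n => (r : ℕ) + 1) (mem_filter.2 ⟨mem_univ _, h.1⟩)

/-- Adding a column to another one with the same lowest one moves that lowest one up. -/
lemma sum_colHeight_colAdd_lt {i a b : Fin n} (ha : IsLow R i a) (hb : IsLow R i b) :
    ∑ c, colHeight (colAdd R a b) c < ∑ c, colHeight R c := by
  have hlt : colHeight (colAdd R a b) b < colHeight R b := by
    have hadd : ∀ x y : ZMod 2, x ≠ 0 → y ≠ 0 → x + y = 0 := by decide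
    refine hb.colHeight_eq ▸ Nat.lt_succ_of_le (colHeight_le_iff.2 fun r hr => ?_)
    simp only [colAdd, if_true] at hr
    rcases lt_trichotomy r i with hri | rfl | hir
    · exact hri
    · exact absurd (hadd _ _ hb.1 ha.1) hr
    · have hzero : ∀ c, IsLow R i c → R r c = 0 := fun c hc =>
        by_contra fun h => (hc.2 r h).not_gt hir
      simp [hzero b hb, hzero a ha] at hr
  refine Finset.sum_lt_sum (fun c _ => ?_) ⟨b, mem_univ b, hlt⟩
  by_cases hc : c = b
  · exact hc ▸ hlt.le
  · simp only [colHeight, colAdd, hc, if_false, le_refl]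

lemma exists_step_sum_colHeight_lt (h : ¬ Reduced R) :
    ∃ N, Step R N ∧ ∑ c, colHeight N c < ∑ c, colHeight R c := by
  simp only [Reduced, not_forall] at h
  obtain ⟨i, a, b, ha, hb, hab⟩ := h
  rcases lt_or_gt_of_ne hab with hab | hba
  · exact ⟨_, ⟨a, b, hab, rfl⟩, sum_colHeight_colAdd_lt ha hb⟩
  · exact ⟨_, ⟨b, a, hba, rfl⟩, sum_colHeight_colAdd_lt hb ha⟩

theorem exists_reduces_reduced (M : Matrix (Fin n) (Fin n) (ZMod 2)) :
    ∃ R, Reduces M R ∧ Reduced R := by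
  induction hM : ∑ c, colHeight M c using Nat.strong_induction_on generalizing M with
  | _ k ih =>
    by_cases h : Reduced M
    · exact ⟨M, .refl, h⟩
    · obtain ⟨N, hMN, hlt⟩ := exists_step_sum_colHeight_lt h
      obtain ⟨R, hNR, hR⟩ := ih _ (hM ▸ hlt) N rfl
      exact ⟨R, .head hMN hNR, hR⟩

end Reduction

section Reduced

variable {R : Matrix (Fin n) (Fin n) (ZMod 2)}

lemma blockRank_filter_ne_zero (I J : Finset (Fin n)) :
    blockRank R I {c ∈ J | ∃ r ∈ I, R r c ≠ 0} = blockRank R I J := by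
  set J' := {c ∈ J | ∃ r ∈ I, R r c ≠ 0}
  set A := R.submatrix ((↑) : I → Fin n) ((↑) : J → Fin n)
  set A' := R.submatrix ((↑) : I → Fin n) ((↑) : J' → Fin n)
  have hspan : span (ZMod 2) (Set.range A'.col) = span (ZMod 2) (Set.range A.col) := by
    refine le_antisymm (span_le.2 (Set.range_subset_iff.2 fun c => ?_))
      (span_le.2 (Set.range_subset_iff.2 fun c => ?_))
    · exact subset_span ⟨⟨c, (mem_filter.1 c.2).1⟩, rfl⟩
    · by_cases hc : ∃ r ∈ I, R r c ≠ 0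
      · exact subset_span ⟨⟨c, mem_filter.2 ⟨c.2, hc⟩⟩, rfl⟩
      · push Not at hc
        rw [show A.col c = 0 from funext fun r => hc r r.2]
        exact zero_mem _
  rw [blockRank, blockRank, rank_eq_finrank_span_cols, rank_eq_finrank_span_cols, hspan]

lemma Reduced.blockRank_eq_card (hR : Reduced R) {I : Finset (Fin n)}
    (hI : IsUpperSet (I : Set (Fin n))) (J : Finset (Fin n)) :
    blockRank R I J = #{c ∈ J | ∃ r ∈ I, R r c ≠ 0} := by
  rw [← blockRank_filter_ne_zero]
  set J := {c ∈ J | ∃ r ∈ I, R r c ≠ 0}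
  have hJ : ∀ c ∈ J, ∃ r ∈ I, R r c ≠ 0 := fun c hc => (mem_filter.1 hc).2
  choose low hlow using fun c : J => exists_isLow (R := R) (c := c) <| by
    obtain ⟨r, -, hr⟩ := hJ c c.2
    exact ⟨r, hr⟩
  have hlowI : ∀ c, low c ∈ I := fun c => by
    obtain ⟨r, hrI, hr⟩ := hJ c c.2
    exact hI ((hlow c).2 r hr) hrI
  have hli : LinearIndependent (ZMod 2) (R.submatrix ((↑) : I → Fin n) ((↑) : J → Fin n)).col :=
    linearIndependent_of_injective_low (fun c => ⟨low c, hlowI c⟩) (fun c => (hlow c).1)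
      (fun c r hr => by_contra fun h => ((hlow c).2 r h).not_gt hr)
      fun c c' h => Subtype.ext <| hR _ _ _ (hlow c) <| by
        rw [show low c = low c' from congrArg Subtype.val h]
        exact hlow c'
  rw [blockRank, rank_eq_finrank_span_cols, finrank_span_eq_card hli, Fintype.card_coe]

lemma card_filter_Iic (p : Fin n → Prop) [DecidablePred p] (j : Fin n) :
    #{c ∈ Iic j | p c} = #{c ∈ Iio j | p c} + if p j then 1 else 0 := by
  rw [← Iio_insert, filter_insert]
  split_ifs
  · exact card_insert_of_notMem (by simp)
  · rfl

lemma isLow_iff_exists {i j : Fin n} :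
    IsLow R i j ↔ (∃ r ∈ Ici i, R r j ≠ 0) ∧ ¬ ∃ r ∈ Ioi i, R r j ≠ 0 := by
  simp only [mem_Ici, mem_Ioi, not_exists, not_and, not_not]
  refine ⟨fun h => ⟨⟨i, le_rfl, h.1⟩, fun r hr => by_contra fun h' => (h.2 r h').not_gt hr⟩,
    fun ⟨⟨r, hir, hr⟩, hgt⟩ => ?_⟩
  have hle : ∀ r, R r j ≠ 0 → r ≤ i := fun r hr => not_lt.1 fun h => hr (hgt r h)
  exact ⟨(le_antisymm (hle r hr) hir) ▸ hr, hle⟩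

/-- The rank criterion of the pairing lemma, `r(i, j) - r(i+1, j) - r(i, j-1) + r(i+1, j-1) = 1`
where `r(i, j)` is the rank of the block of rows `≥ i` and columns `≤ j`, written without
subtraction. -/
def IsRankPair (M : Matrix (Fin n) (Fin n) (ZMod 2)) (i j : Fin n) : Prop :=
  blockRank M (Ici i) (Iic j) + blockRank M (Ioi i) (Iio j) =
    blockRank M (Ioi i) (Iic j) + blockRank M (Ici i) (Iio j) + 1

lemma Reduced.isLow_iff_isRankPair (hR : Reduced R) {i j : Fin n} :
    IsLow R i j ↔ IsRankPair R i j := by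
  simp only [IsRankPair, hR.blockRank_eq_card (coe_Ici i ▸ isUpperSet_Ici i),
    hR.blockRank_eq_card (coe_Ioi i ▸ isUpperSet_Ioi i), card_filter_Iic, isLow_iff_exists]
  by_cases hge : ∃ r ∈ Ici i, R r j ≠ 0 <;> by_cases hgt : ∃ r ∈ Ioi i, R r j ≠ 0 <;>
    simp only [hge, hgt, if_true, if_false, not_true, not_false_eq_true, and_true, and_false,
      true_iff, false_iff] <;>
    omega

end Reduced

lemma blockRank_antiTranspose (M : Matrix (Fin n) (Fin n) (ZMod 2)) (I J : Finset (Fin n)) :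
    blockRank (antiTranspose M) (J.map Fin.revPerm.toEmbedding) (I.map Fin.revPerm.toEmbedding) =
      blockRank M I J := by
  let e : ∀ S : Finset (Fin n), S.map Fin.revPerm.toEmbedding ≃ S := fun S =>
    Fin.revPerm.subtypeEquiv fun a => by simp
  have hsub : (antiTranspose M).submatrix ((↑) : J.map Fin.revPerm.toEmbedding → Fin n)
      ((↑) : I.map Fin.revPerm.toEmbedding → Fin n) =
      (M.submatrix ((↑) : I → Fin n) ((↑) : J → Fin n))ᵀ.submatrix (e J) (e I) := by
    ext r c
    rfl
  rw [blockRank, hsub, rank_submatrix, rank_transpose, blockRank]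

lemma isRankPair_antiTranspose (M : Matrix (Fin n) (Fin n) (ZMod 2)) (i j : Fin n) :
    IsRankPair (antiTranspose M) j.rev i.rev ↔ IsRankPair M i j := by
  rw [IsRankPair, IsRankPair, ← Fin.map_revPerm_Iic, ← Fin.map_revPerm_Iio, ← Fin.map_revPerm_Ici,
    ← Fin.map_revPerm_Ioi, blockRank_antiTranspose, blockRank_antiTranspose,
    blockRank_antiTranspose, blockRank_antiTranspose]
  omega

lemma Reduces.isRankPair_iff {M R : Matrix (Fin n) (Fin n) (ZMod 2)} (h : Reduces M R)
    (i j : Fin n) : IsRankPair R i j ↔ IsRankPair M i j := by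
  simp only [IsRankPair, h.blockRank_eq _ (coe_Iic j ▸ isLowerSet_Iic j),
    h.blockRank_eq _ (coe_Iio j ▸ isLowerSet_Iio j)]

theorem persPair_iff_isRankPair (M : Matrix (Fin n) (Fin n) (ZMod 2)) (i j : Fin n) :
    PersPair M i j ↔ IsRankPair M i j := by
  refine ⟨fun ⟨R, hMR, hR, hlow⟩ => (hMR.isRankPair_iff i j).1 (hR.isLow_iff_isRankPair.1 hlow),
    fun h => ?_⟩
  obtain ⟨R, hMR, hR⟩ := exists_reduces_reduced M
  exact ⟨R, hMR, hR, hR.isLow_iff_isRankPair.2 ((hMR.isRankPair_iff i j).2 h)⟩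

theorem persPair_antiTranspose_general
    {n : ℕ} (M : Matrix (Fin n) (Fin n) (ZMod 2)) (i j : Fin n) :
    PersPair M i j ↔ PersPair (antiTranspose M) j.rev i.rev := by
  rw [persPair_iff_isRankPair, persPair_iff_isRankPair, isRankPair_antiTranspose]

/-- anti-transpose duality. For a strictly upper triangular
matrix `M`, (i, j) is a persistence pair of `M` iff (n+1-j, n+1-i) is a
persistence pair of the anti-transpose of `M`. -/
theorem persPair_antiTranspose
    {n : ℕ} (M : Matrix (Fin n) (Fin n) (ZMod 2))
    (hupper : ∀ i j : Fin n, j ≤ i → M i j = 0) (i j : Fin n) :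
    PersPair M i j ↔ PersPair (antiTranspose M) j.rev i.rev :=
  persPair_antiTranspose_general M i j
end
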